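/- There exists N₀ such that the following holds for every integer N ≥ N₀ with gcd(N, 6) = 1, every finite additive abelian group G of cardinality N, every useful pair (S, k) with S ⊆ G, and every dissociated set X ⊆ S with |X| = k which has lack of structure with respect to S: the number of subsets A ⊆ G with E[X] ⊆ A for which there exists a dissociated set Y ⊆ S with |Y| = k, Y ≠ X, E[Y] ⊆ A and |E[X] ∩ E[Y]| = 1 is at most (1/10)·2^(N − C(k,2)). (Note that since X is dissociated, the number of subsets A ⊆ G with E[X] ⊆ A equals 2^(N − C(k,2)).) -/

import Mathlib

open Finset

/-- The restricted sumset `E[X] = X +̂ X = {x + x' : x, x' ∈ X, x ≠ x'}`. -/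
def EHat {G : Type*} [AddCommGroup G] [DecidableEq G] (X : Finset G) : Finset G :=
  ((X ×ˢ X).filter fun p => p.1 ≠ p.2).image fun p => p.1 + p.2

/-- The number of quadruples `(x₁, x₂, s₁, s₂) ∈ X × X × S × S` with `x₁ ≠ x₂`,
`s₁ ≠ s₂` and `x₁ + x₂ = s₁ + s₂`. -/
def quadCount {G : Type*} [AddCommGroup G] [DecidableEq G] (X S : Finset G) : ℕ :=
  (((X ×ˢ X) ×ˢ (S ×ˢ S)).filter fun q =>
    q.1.1 ≠ q.1.2 ∧ q.2.1 ≠ q.2.2 ∧ q.1.1 + q.1.2 = q.2.1 + q.2.2).card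

/-- `X` has lack of structure with respect to `S` (in a group of cardinality `N`). -/
def LackOfStructure {G : Type*} [AddCommGroup G] [DecidableEq G]
    (X S : Finset G) (N : ℕ) : Prop :=
  (quadCount X S : ℝ) ≤ (S.card : ℝ) / Real.log N ^ 15

/-- A pair `(S, k)` is useful. -/
def Useful {G : Type*} [AddCommGroup G] [Fintype G] [DecidableEq G]
    (S : Finset G) (k : ℕ) : Prop :=
  -- (i) cardinality
  ((Fintype.card G : ℝ) / (2 ^ 12 * Real.log (Fintype.card G) ^ 20) < (S.card : ℝ) ∧
    (S.card : ℝ) ≤ (Fintype.card G : ℝ) / Real.log (Fintype.card G) ^ 20) ∧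
  -- (ii) good clique size
  (Real.logb 2 (Fintype.card G) ≤ (k : ℝ) ∧
    (k : ℝ) ≤ 3 * Real.logb 2 (Fintype.card G) ∧
    (Fintype.card G : ℝ) / (2 * Real.log (Fintype.card G) ^ 8) <
      (S.card.choose k : ℝ) * 2 ^ (-(k.choose 2 : ℤ)) ∧
    (S.card.choose k : ℝ) * 2 ^ (-(k.choose 2 : ℤ)) ≤
      (Fintype.card G : ℝ) / Real.log (Fintype.card G) ^ 8) ∧
  -- (iii) lack of structure for at least 90% of k-element subsets of S
  9 * (S.powersetCard k).card ≤
    10 * Nat.card {X : Finset G // X ⊆ S ∧ X.card = k ∧ LackOfStructure X S (Fintype.card G)}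

/-- A set `X` is dissociated: any two representations of an element as a sum of four
elements of `X` agree up to permutation. -/
def Dissociated {G : Type*} [AddCommGroup G] (X : Finset G) : Prop :=
  ∀ x₁ x₂ x₃ x₄ y₁ y₂ y₃ y₄ : G, x₁ ∈ X → x₂ ∈ X → x₃ ∈ X → x₄ ∈ X →
    y₁ ∈ X → y₂ ∈ X → y₃ ∈ X → y₄ ∈ X →
    x₁ + x₂ + x₃ + x₄ = y₁ + y₂ + y₃ + y₄ →
    ({x₁, x₂, x₃, x₄} : Multiset G) = {y₁, y₂, y₃, y₄}

/-!
Every set `A ⊇ E[X]` being counted contains `E[X] ∪ E[Y]` for some `k`-subset `Y ⊆ S` with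
`|E[X] ∩ E[Y]| = 1`. As `X` and `Y` are dissociated this union has `2·C(k,2) - 1` elements, so by
the union bound it suffices that there are at most `2^C(k,2) / 20` such `Y`. Each such `Y` contains
a pair `s₁ ≠ s₂` with `s₁ + s₂ ∈ E[X]`, and each such pair lies in at least two of the quadruples
counted by lack of structure; hence there are at most `|S| (log N)^(-15) · C(|S|, k-2) / 2` of
them. Comparing `C(|S|, k-2)` with `C(|S|, k)` and using the size conditions of usefulness, this
is `O(2^C(k,2) / log N)`.
-/

open Filter

section Superset

variable {α : Type*} [DecidableEq α]

lemma card_filter_superset_powersetCard_le (S T : Finset α) (k : ℕ) :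
    #{Y ∈ S.powersetCard k | T ⊆ Y} ≤ (#S).choose (k - #T) := by
  rw [← card_powersetCard]
  refine card_le_card_of_injOn (· \ T) (fun Y hY ↦ ?_) (fun Y hY Y' hY' h ↦ ?_)
  · obtain ⟨⟨hYS, hYk⟩, hTY⟩ := mem_filter.1 hY |>.imp_left mem_powersetCard.1
    exact mem_powersetCard.2 ⟨sdiff_subset.trans hYS, by rw [card_sdiff_of_subset hTY, hYk]⟩
  · calc Y = Y \ T ∪ T := (sdiff_union_of_subset (mem_filter.1 hY).2).symm
      _ = Y' \ T ∪ T := by rw [show Y \ T = Y' \ T from h]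
      _ = Y' := sdiff_union_of_subset (mem_filter.1 hY').2

variable [Fintype α]

lemma card_filter_superset_le (T : Finset α) :
    #{A : Finset α | T ⊆ A} ≤ 2 ^ (Fintype.card α - #T) :=
  calc #{A : Finset α | T ⊆ A} ≤ #(Tᶜ.powerset.image (· ∪ T)) := by
        refine card_le_card fun A hA ↦
          mem_image.2 ⟨A \ T, ?_, sdiff_union_of_subset (mem_filter.1 hA).2⟩
        rw [mem_powerset, sdiff_eq_inter_compl]
        exact inter_subset_right
    _ ≤ #Tᶜ.powerset := card_image_le
    _ = 2 ^ (Fintype.card α - #T) := by rw [card_powerset, card_compl]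

lemma card_exists_superset_le {ι : Type*} (I : Finset ι) (T : ι → Finset α) :
    (#{A : Finset α | ∃ i ∈ I, T i ⊆ A} : ℝ) ≤
      ∑ i ∈ I, (2 : ℝ) ^ ((Fintype.card α : ℤ) - #(T i)) := by
  have hunion : ({A : Finset α | ∃ i ∈ I, T i ⊆ A} : Finset (Finset α)) =
      I.biUnion fun i ↦ {A : Finset α | T i ⊆ A} := by
    ext A
    simp
  rw [hunion]
  refine (Nat.cast_le.2 card_biUnion_le).trans ?_
  push_cast
  refine sum_le_sum fun i _ ↦ ?_
  rw [← Nat.cast_sub (card_le_univ (T i)), zpow_natCast]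
  exact_mod_cast card_filter_superset_le (T i)

end Superset

lemma Nat.choose_mul_sq_le {n m : ℕ} (h : 2 * m + 2 ≤ n) :
    n.choose m * n ^ 2 ≤ 4 * (m + 2) ^ 2 * n.choose (m + 2) := by
  have e : n.choose m * ((n - m) * (n - (m + 1))) = n.choose (m + 2) * ((m + 2) * (m + 1)) := by
    rw [← mul_assoc, ← Nat.choose_succ_right_eq, mul_right_comm, ← Nat.choose_succ_right_eq]
    ring
  calc n.choose m * n ^ 2 ≤ n.choose m * (4 * ((n - m) * (n - (m + 1)))) := by
        gcongr
        have h1 : n ≤ 2 * (n - (m + 1)) := by omega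
        have h2 : n ≤ 2 * (n - m) := by omega
        nlinarith
    _ = 4 * (n.choose (m + 2) * ((m + 2) * (m + 1))) := by rw [← e]; ring
    _ ≤ 4 * (n.choose (m + 2) * ((m + 2) * (m + 2))) := by gcongr; omega
    _ = 4 * (m + 2) ^ 2 * n.choose (m + 2) := by ring

lemma eventually_le_log_and_mul_log_pow_le (c d : ℝ) (m : ℕ) :
    ∀ᶠ N : ℕ in atTop, c ≤ Real.log N ∧ d * Real.log N ^ m ≤ N := by
  have hN := tendsto_natCast_atTop_atTop (R := ℝ)
  have ho := (Real.isLittleO_pow_log_id_atTop (n := m)).const_mul_left d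
  filter_upwards [(Real.tendsto_log_atTop.comp hN).eventually_ge_atTop c,
    hN.eventually ho.eventuallyLE] with N hc hd
  refine ⟨hc, (le_abs_self _).trans (hd.trans ?_)⟩
  simp

section EHat

variable {G : Type*} [AddCommGroup G]

-- Pad both sides with `a + a` to get an identity between sums of four elements.
lemma Dissociated.pair_eq_of_add_eq {X : Finset G} (hX : Dissociated X) {a b c d : G}
    (ha : a ∈ X) (hb : b ∈ X) (hc : c ∈ X) (hd : d ∈ X) (h : a + b = c + d) :
    ({a, b} : Multiset G) = {c, d} :=
  add_right_cancel (b := ({a, a} : Multiset G))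
    (hX a b a a c d a a ha hb ha ha hc hd ha ha (by rw [h]))

variable [DecidableEq G]

lemma mem_EHat {X : Finset G} {b : G} :
    b ∈ EHat X ↔ ∃ a ∈ X, ∃ c ∈ X, a ≠ c ∧ a + c = b := by
  simp [EHat, and_assoc]

lemma EHat_eq_image_powersetCard (X : Finset G) :
    EHat X = (X.powersetCard 2).image fun s ↦ ∑ x ∈ s, x := by
  ext b
  simp only [mem_EHat, mem_image, mem_powersetCard, card_eq_two]
  constructor
  · rintro ⟨a, ha, c, hc, hac, rfl⟩
    refine ⟨{a, c}, ⟨?_, a, c, hac, rfl⟩, sum_pair hac⟩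
    rw [insert_subset_iff, singleton_subset_iff]
    exact ⟨ha, hc⟩
  · rintro ⟨s, ⟨hsX, a, c, hac, rfl⟩, rfl⟩
    rw [insert_subset_iff, singleton_subset_iff] at hsX
    exact ⟨a, hsX.1, c, hsX.2, hac, (sum_pair (f := fun x ↦ x) hac).symm⟩

lemma Dissociated.card_EHat {X : Finset G} (hX : Dissociated X) : #(EHat X) = (#X).choose 2 := by
  rw [EHat_eq_image_powersetCard, card_image_of_injOn, card_powersetCard]
  intro s hs t ht hst
  obtain ⟨hsX, a, b, hab, rfl⟩ := (mem_powersetCard.1 hs).imp_right card_eq_two.1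
  obtain ⟨htX, c, d, hcd, rfl⟩ := (mem_powersetCard.1 ht).imp_right card_eq_two.1
  rw [insert_subset_iff, singleton_subset_iff] at hsX htX
  simp only [sum_pair hab, sum_pair hcd] at hst
  simpa using congrArg Multiset.toFinset (hX.pair_eq_of_add_eq hsX.1 hsX.2 htX.1 htX.2 hst)

lemma Dissociated.card_EHat_union {X Y : Finset G} {k : ℕ} (hX : Dissociated X)
    (hY : Dissociated Y) (hXk : #X = k) (hYk : #Y = k) (hXY : #(EHat X ∩ EHat Y) = 1) :
    (#(EHat X ∪ EHat Y) : ℤ) = 2 * k.choose 2 - 1 := by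
  have := card_union_add_card_inter (EHat X) (EHat Y)
  rw [hX.card_EHat, hY.card_EHat, hXk, hYk, hXY] at this
  omega

lemma two_mul_card_pairs_le_quadCount (X S : Finset G) :
    2 * #{p ∈ S ×ˢ S | p.1 ≠ p.2 ∧ p.1 + p.2 ∈ EHat X} ≤ quadCount X S := by
  refine mul_card_image_le_card_of_maps_to (f := Prod.snd) ?_ 2 ?_
  · rintro ⟨⟨x₁, x₂⟩, s₁, s₂⟩ hq
    simp only [mem_filter, mem_product] at hq ⊢
    obtain ⟨⟨⟨hx₁, hx₂⟩, hs⟩, hx, hne, hsum⟩ := hq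
    exact ⟨hs, hne, hsum ▸ mem_EHat.2 ⟨x₁, hx₁, x₂, hx₂, hx, rfl⟩⟩
  · rintro ⟨s₁, s₂⟩ hp
    simp only [mem_filter, mem_product] at hp
    obtain ⟨⟨hs₁, hs₂⟩, hne, hE⟩ := hp
    obtain ⟨a, ha, c, hc, hac, hsum⟩ := mem_EHat.1 hE
    refine one_lt_card.2 ⟨((a, c), s₁, s₂), ?_, ((c, a), s₁, s₂), ?_, by simp [hac]⟩
    · simp [ha, hc, hs₁, hs₂, hac, hne, hsum]
    · simp [ha, hc, hs₁, hs₂, hac.symm, hne, add_comm c a, hsum]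

lemma card_filter_EHat_meets_le (S B : Finset G) (k : ℕ) :
    #{Y ∈ S.powersetCard k | (B ∩ EHat Y).Nonempty} ≤
      #{p ∈ S ×ˢ S | p.1 ≠ p.2 ∧ p.1 + p.2 ∈ B} * (#S).choose (k - 2) := by
  set P := {p ∈ S ×ˢ S | p.1 ≠ p.2 ∧ p.1 + p.2 ∈ B}
  calc _ ≤ #(P.biUnion fun p ↦ {Y ∈ S.powersetCard k | {p.1, p.2} ⊆ Y}) := by
        refine card_le_card fun Y hY ↦ ?_
        obtain ⟨hY, b, hb⟩ := mem_filter.1 hY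
        obtain ⟨hbB, hbY⟩ := mem_inter.1 hb
        obtain ⟨a, ha, c, hc, hac, rfl⟩ := mem_EHat.1 hbY
        have hYS := (mem_powersetCard.1 hY).1
        simp only [mem_biUnion, mem_filter, P, mem_product]
        refine ⟨(a, c), ⟨⟨hYS ha, hYS hc⟩, hac, hbB⟩, hY, ?_⟩
        rw [insert_subset_iff, singleton_subset_iff]
        exact ⟨ha, hc⟩
    _ ≤ ∑ p ∈ P, #{Y ∈ S.powersetCard k | {p.1, p.2} ⊆ Y} := card_biUnion_le
    _ ≤ ∑ _p ∈ P, (#S).choose (k - 2) := by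
        refine sum_le_sum fun p hp ↦ ?_
        have hcard : #({p.1, p.2} : Finset G) = 2 := card_pair (mem_filter.1 hp).2.1
        simpa [hcard] using card_filter_superset_powersetCard_le S {p.1, p.2} k
    _ = #P * (#S).choose (k - 2) := by rw [sum_const, smul_eq_mul]

lemma two_mul_card_filter_EHat_meets_le_quadCount_mul (X S : Finset G) (k : ℕ) :
    2 * #{Y ∈ S.powersetCard k | (EHat X ∩ EHat Y).Nonempty} ≤
      quadCount X S * (#S).choose (k - 2) :=
  calc 2 * #{Y ∈ S.powersetCard k | (EHat X ∩ EHat Y).Nonempty}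
      ≤ 2 * (#{p ∈ S ×ˢ S | p.1 ≠ p.2 ∧ p.1 + p.2 ∈ EHat X} * (#S).choose (k - 2)) :=
        Nat.mul_le_mul_left 2 (card_filter_EHat_meets_le S (EHat X) k)
    _ ≤ quadCount X S * (#S).choose (k - 2) := by
        rw [← mul_assoc]
        exact Nat.mul_le_mul_right _ (two_mul_card_pairs_le_quadCount X S)

variable [Fintype G]

section Useful

variable {S : Finset G} {k : ℕ}

lemma Useful.log_card_le (h : Useful S k) : Real.log (Fintype.card G) ≤ k := by
  have hL : 0 ≤ Real.log (Fintype.card G) := Real.log_natCast_nonneg _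
  have hlog2 : Real.log 2 < 1 := by linarith [Real.log_two_lt_d9]
  calc Real.log (Fintype.card G) ≤ Real.logb 2 (Fintype.card G) := by
        rw [Real.logb, le_div_iff₀ (Real.log_pos one_lt_two)]
        nlinarith
    _ ≤ k := h.2.1.1

lemma Useful.natCast_le_five_mul_log (h : Useful S k) :
    (k : ℝ) ≤ 5 * Real.log (Fintype.card G) := by
  have hL : 0 ≤ Real.log (Fintype.card G) := Real.log_natCast_nonneg _
  calc (k : ℝ) ≤ 3 * Real.logb 2 (Fintype.card G) := h.2.1.2.1
    _ ≤ 5 * Real.log (Fintype.card G) := by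
      rw [Real.logb, mul_div_assoc', div_le_iff₀ (Real.log_pos one_lt_two)]
      nlinarith [Real.log_two_gt_d9]

lemma Useful.card_lt_mul_log_pow (h : Useful S k) (hL : 0 < Real.log (Fintype.card G)) :
    (Fintype.card G : ℝ) < 4096 * #S * Real.log (Fintype.card G) ^ 20 := by
  have h' := h.1.1
  rw [div_lt_iff₀ (by positivity)] at h'
  linarith

lemma Useful.choose_mul_log_pow_le (h : Useful S k) (hL : 0 < Real.log (Fintype.card G)) :
    ((#S).choose k : ℝ) * Real.log (Fintype.card G) ^ 8 ≤ 2 ^ k.choose 2 * Fintype.card G := by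
  have h' := h.2.1.2.2.2
  rw [zpow_neg, zpow_natCast, ← div_eq_mul_inv,
    div_le_div_iff₀ (by positivity) (by positivity)] at h'
  linarith

end Useful

lemma twenty_mul_card_filter_EHat_meets_le {S X : Finset G} {k : ℕ}
    (hU : Useful S k) (hX : LackOfStructure X S (Fintype.card G))
    (hL : 4096000 ≤ Real.log (Fintype.card G))
    (hN : 40960 * Real.log (Fintype.card G) ^ 21 ≤ Fintype.card G) :
    20 * (#{Y ∈ S.powersetCard k | (EHat X ∩ EHat Y).Nonempty} : ℝ) ≤ 2 ^ k.choose 2 := by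
  have hL0 : 0 < Real.log (Fintype.card G) := by linarith
  have hk := hU.natCast_le_five_mul_log
  have hC := hU.choose_mul_log_pow_le hL0
  have hNS := hU.card_lt_mul_log_pow hL0
  have hk2 : 2 ≤ k := by exact_mod_cast (by linarith [hU.log_card_le] : (2 : ℝ) ≤ k)
  set L := Real.log (Fintype.card G)
  set y := #{Y ∈ S.powersetCard k | (EHat X ∩ EHat Y).Nonempty}
  have hkS : 2 * k ≤ #S := by
    have : (2 * k : ℝ) < #S := by nlinarith [pow_pos hL0 20]
    exact_mod_cast this.le
  obtain ⟨m, rfl⟩ : ∃ m, k = m + 2 := ⟨k - 2, by omega⟩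
  have hy : 2 * y ≤ quadCount X S * (#S).choose m :=
    two_mul_card_filter_EHat_meets_le_quadCount_mul X S (m + 2)
  have hc : ((#S).choose m : ℝ) * #S ^ 2 ≤
      4 * ((m + 2 : ℕ) : ℝ) ^ 2 * (#S).choose (m + 2) :=
    mod_cast Nat.choose_mul_sq_le (by omega)
  have hq : (quadCount X S : ℝ) * L ^ 15 ≤ #S := (le_div_iff₀ (by positivity)).1 hX
  have hS : (0 : ℝ) < #S := by exact_mod_cast (by omega : 0 < #S)
  have key :
      2 * y * L * (#S ^ 2 * L ^ 22) ≤ 409600 * 2 ^ (m + 2).choose 2 * (#S ^ 2 * L ^ 22) :=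
    calc 2 * y * L * (#S ^ 2 * L ^ 22)
        ≤ (quadCount X S * (#S).choose m : ℕ) * (#S ^ 2 * L ^ 23) := by
          rw [show 2 * (y : ℝ) * L * (#S ^ 2 * L ^ 22) = (2 * y : ℕ) * (#S ^ 2 * L ^ 23) by
            push_cast; ring]
          gcongr
      _ = (quadCount X S * L ^ 15) * ((#S).choose m * #S ^ 2) * L ^ 8 := by push_cast; ring
      _ ≤ #S * (4 * ((m + 2 : ℕ) : ℝ) ^ 2 * (#S).choose (m + 2)) * L ^ 8 := by gcongr
      _ = 4 * #S * ((m + 2 : ℕ) : ℝ) ^ 2 * ((#S).choose (m + 2) * L ^ 8) := by ring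
      _ ≤ 4 * #S * (5 * L) ^ 2 * (2 ^ (m + 2).choose 2 * (4096 * #S * L ^ 20)) := by
          gcongr 4 * #S * ?_ ^ 2 * ?_
          exact hC.trans (by gcongr)
      _ = 409600 * 2 ^ (m + 2).choose 2 * (#S ^ 2 * L ^ 22) := by ring
  have hyL := le_of_mul_le_mul_right key (by positivity)
  nlinarith

end EHat

theorem conditional_count_ell_eq_one :
    ∃ N₀ : ℕ, ∀ N : ℕ, N₀ ≤ N → Nat.gcd N 6 = 1 →
      ∀ (G : Type) [AddCommGroup G] [Fintype G] [DecidableEq G], Fintype.card G = N →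
        ∀ (S : Finset G) (k : ℕ), Useful S k →
          ∀ X : Finset G, X ⊆ S → X.card = k → Dissociated X → LackOfStructure X S N →
            (Nat.card {A : Finset G // EHat X ⊆ A ∧
              ∃ Y : Finset G, Y ⊆ S ∧ Dissociated Y ∧ Y.card = k ∧ Y ≠ X ∧
                EHat Y ⊆ A ∧ (EHat X ∩ EHat Y).card = 1} : ℝ) ≤
              (1 / 10) * 2 ^ ((N : ℤ) - (k.choose 2 : ℤ)) := by
  classical
  obtain ⟨N₀, hN₀⟩ :=
    (eventually_le_log_and_mul_log_pow_le 4096000 40960 21).exists_forall_of_atTop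
  refine ⟨N₀, fun N hN _ G _ _ _ hG S k hU X _ hXk hX hXlos ↦ ?_⟩
  subst hG
  obtain ⟨hL, hLN⟩ := hN₀ _ hN
  set 𝒴 := {Y ∈ S.powersetCard k | Dissociated Y ∧ #(EHat X ∩ EHat Y) = 1}
  have h𝒴 : 20 * (#𝒴 : ℝ) ≤ 2 ^ k.choose 2 := by
    refine le_trans ?_ (twenty_mul_card_filter_EHat_meets_le hU hXlos hL hLN)
    gcongr
    exact monotone_filter_right _ fun Y _ hY ↦ card_pos.1 (by rw [hY.2]; exact one_pos)
  have hunion : ∀ Y ∈ 𝒴, (#(EHat X ∪ EHat Y) : ℤ) = 2 * k.choose 2 - 1 := fun Y hY ↦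
    have ⟨hY, hYd, hYX⟩ := mem_filter.1 hY
    hX.card_EHat_union hYd hXk (mem_powersetCard.1 hY).2 hYX
  calc (Nat.card {A : Finset G // _} : ℝ)
      ≤ #{A : Finset G | ∃ Y ∈ 𝒴, EHat X ∪ EHat Y ⊆ A} := by
        rw [Nat.card_eq_fintype_card, Fintype.card_subtype]
        refine Nat.cast_le.2 (card_le_card (monotone_filter_right _ ?_))
        rintro A - ⟨hXA, Y, hYS, hYd, hYk, -, hYA, hYX⟩
        exact ⟨Y, mem_filter.2 ⟨mem_powersetCard.2 ⟨hYS, hYk⟩, hYd, hYX⟩,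
          union_subset hXA hYA⟩
    _ ≤ ∑ Y ∈ 𝒴, (2 : ℝ) ^ ((Fintype.card G : ℤ) - #(EHat X ∪ EHat Y)) :=
        card_exists_superset_le 𝒴 _
    _ = #𝒴 * 2 ^ ((Fintype.card G : ℤ) - (2 * k.choose 2 - 1)) := by
        rw [sum_congr rfl fun Y hY ↦ by rw [hunion Y hY], sum_const, nsmul_eq_mul]
    _ ≤ 2 ^ k.choose 2 / 20 * 2 ^ ((Fintype.card G : ℤ) - (2 * k.choose 2 - 1)) := by
        gcongr
        linarith
    _ = (1 / 10) * 2 ^ ((Fintype.card G : ℤ) - (k.choose 2 : ℤ)) := by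
        rw [← zpow_natCast, div_mul_eq_mul_div, ← zpow_add₀ two_ne_zero,
          show (k.choose 2 : ℤ) + (Fintype.card G - (2 * k.choose 2 - 1)) =
            Fintype.card G - k.choose 2 + 1 by ring, zpow_add_one₀ two_ne_zero]
        ring
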